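/- arXiv:2504.05986 — 2 statements merged into one kernel-verified Lean document; each statement's English description precedes it below -/
import Mathlib

section
/- Let $B = B(0,1)$ be the open unit ball of $\mathbb{R}^n$, $n \ge 1$. There exist constants $c_1, c_2 > 0$ (depending only on $n$) such that for every $x \in \mathbb{R}^n$ with $|x| < 2$: $c_1\,(2 - |x|)^{\frac{n+1}{2}} \le m\big(B \cap (x - B)\big) \le c_2\,(2 - |x|)^{\frac{n+1}{2}}$, and $m(B \cap (x - B)) = 0$ whenever $|x| \ge 2$. -/
open MeasureTheory

/-- `omegaSet Ω x = m(Ω ∩ (x - Ω))`. -/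
noncomputable def omegaSet {n : ℕ} (Ω : Set (EuclideanSpace ℝ (Fin n)))
    (x : EuclideanSpace ℝ (Fin n)) : ℝ :=
  (volume (Ω ∩ ((fun y => x - y) '' Ω))).toReal

namespace Stmt11Aux

lemma image_sub {n : ℕ} (x : EuclideanSpace ℝ (Fin n)) :
    (fun y => x - y) '' Metric.ball 0 1 = Metric.ball x 1 := by
  ext z
  constructor
  · rintro ⟨y, hy, rfl⟩
    rw [mem_ball_zero_iff] at hy
    rw [Metric.mem_ball, dist_eq_norm]
    simpa using hy
  · intro hz
    rw [Metric.mem_ball, dist_eq_norm, ← norm_sub_rev] at hz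
    exact ⟨x - z, by rwa [mem_ball_zero_iff], by module⟩


lemma t_pow {t : ℝ} (ht : 0 < t) {n : ℕ} (hn : 1 ≤ n) :
    t * Real.sqrt t ^ (n-1) = t ^ (((n:ℝ)+1)/2) := by
  have h1 : Real.sqrt t ^ (n-1) = t ^ ((((n:ℕ) - 1 : ℕ):ℝ)/2) := by
    rw [Real.sqrt_eq_rpow, ← Real.rpow_natCast (t ^ ((1:ℝ)/2)) (n-1), ← Real.rpow_mul ht.le]
    ring_nf
  rw [h1, Nat.cast_sub hn, Nat.cast_one]
  nth_rewrite 1 [← Real.rpow_one t]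
  rw [← Real.rpow_add ht]
  ring_nf



noncomputable def diagL (n : ℕ) (d : Fin n → ℝ) :
    EuclideanSpace ℝ (Fin n) →ₗ[ℝ] EuclideanSpace ℝ (Fin n) where
  toFun w := WithLp.toLp 2 (fun i => d i * w i : Fin n → ℝ)
  map_add' w v := by ext i; simp [mul_add]
  map_smul' c w := by ext i; simp; ring

lemma diagL_apply {n : ℕ} (d : Fin n → ℝ) (w : EuclideanSpace ℝ (Fin n)) (i : Fin n) :
    diagL n d w i = d i * w i := rfl

lemma det_diagL {n : ℕ} (d : Fin n → ℝ) : LinearMap.det (diagL n d) = ∏ i, d i := by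
  have h : LinearMap.toMatrix (PiLp.basisFun 2 ℝ (Fin n)) (PiLp.basisFun 2 ℝ (Fin n)) (diagL n d)
      = Matrix.diagonal d := by
    ext i j
    simp [LinearMap.toMatrix_apply, diagL_apply, Matrix.diagonal, Pi.single_apply]
  rw [← LinearMap.det_toMatrix (PiLp.basisFun 2 ℝ (Fin n)), h, Matrix.det_diagonal]

lemma norm_lt_iff_sum_sq {n : ℕ} {v : EuclideanSpace ℝ (Fin n)} {c : ℝ} (hc : 0 < c) :
    ‖v‖ < c ↔ ∑ i, (v i)^2 < c^2 := by
  rw [EuclideanSpace.norm_eq]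
  simp only [Real.norm_eq_abs, sq_abs]
  exact Real.sqrt_lt' hc

section
variable {n : ℕ}
local notation "E" => EuclideanSpace ℝ (Fin n)

lemma exists_rot (x : E) (e : E) (he : ‖e‖ = 1) :
    ∃ O : E ≃ₗᵢ[ℝ] E, x = ‖x‖ • O e := by
  by_cases hx : x = 0
  · exact ⟨LinearIsometryEquiv.refl ℝ _, by simp [hx]⟩
  · set u : E := ‖x‖⁻¹ • x with hu
    have hun : ‖e‖ = ‖u‖ := by
      rw [he, hu, norm_smul, norm_inv, norm_norm, inv_mul_cancel₀ (norm_ne_zero_iff.2 hx)]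
    refine ⟨Submodule.reflection (ℝ ∙ (e - u))ᗮ, ?_⟩
    rw [Submodule.reflection_sub hun, hu, smul_inv_smul₀ (norm_ne_zero_iff.2 hx)]

lemma vol_img (O : E ≃ₗᵢ[ℝ] E) (c : E) (f : E →ₗ[ℝ] E) (s : Set E) :
    volume ((fun w => O (c + f w)) '' s) = ENNReal.ofReal |LinearMap.det f| * volume s := by
  have h1 : (fun w => O (c + f w)) '' s = O '' ((fun y => c + y) '' (f '' s)) := by
    rw [Set.image_image, Set.image_image]
  have h2 : ∀ A : Set (EuclideanSpace ℝ (Fin n)), volume (O '' A) = volume A := by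
    intro A
    rw [Set.image_eq_preimage_of_inverse O.symm_apply_apply O.apply_symm_apply]
    exact O.symm.measurePreserving.measure_preimage_emb
      O.symm.toHomeomorph.measurableEmbedding A
  have h3 : (fun y => c + y) '' (f '' s) = (fun y => -c + y) ⁻¹' (f '' s) := by
    ext z
    simp only [Set.mem_image, Set.mem_preimage]
    constructor
    · rintro ⟨y, hy, rfl⟩; simpa using hy
    · intro hz; exact ⟨-c + z, hz, by module⟩
  rw [h1, h2, h3, measure_preimage_add, Measure.addHaar_image_linearMap]

lemma split_sq (v : EuclideanSpace ℝ (Fin n)) (β : ℝ) (i0 : Fin n) :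
    ∑ i, ((v - β • EuclideanSpace.single i0 (1:ℝ)) i)^2
      = (v i0 - β)^2 + ∑ i ∈ Finset.univ.erase i0, (v i)^2 := by
  rw [← Finset.add_sum_erase _ _ (Finset.mem_univ i0)]
  congr 1
  · simp [EuclideanSpace.single_apply, PiLp.sub_apply, PiLp.smul_apply]
  · refine Finset.sum_congr rfl fun i hi => ?_
    have hii : i ≠ i0 := Finset.ne_of_mem_erase hi
    simp [EuclideanSpace.single_apply, PiLp.sub_apply, PiLp.smul_apply, hii]

lemma split_sq0 (v : EuclideanSpace ℝ (Fin n)) (i0 : Fin n) :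
    ∑ i, (v i)^2 = (v i0)^2 + ∑ i ∈ Finset.univ.erase i0, (v i)^2 :=
  (Finset.add_sum_erase _ _ (Finset.mem_univ i0)).symm

lemma prod_ite (i0 : Fin n) (a b : ℝ) :
    ∏ i, (if i = i0 then a else b) = a * b^(n-1) := by
  rw [← Finset.mul_prod_erase _ _ (Finset.mem_univ i0), if_pos rfl]
  congr 1
  rw [Finset.prod_congr rfl (fun i hi => if_neg (Finset.ne_of_mem_erase hi)),
    Finset.prod_const, Finset.card_erase_of_mem (Finset.mem_univ i0), Finset.card_univ,
    Fintype.card_fin]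

lemma lower_coords {r t W S : ℝ} (hr0 : 0 ≤ r) (hr2 : r < 2) (ht : t = 2 - r)
    (hS : 0 ≤ S) (hWS : W^2 + S < 1) :
    (r/2 + t/16 + (t/16) * W)^2 + (t/16) * S < 1 ∧
    (r/2 + t/16 + (t/16) * W - r)^2 + (t/16) * S < 1 := by
  have ht0 : 0 < t := by linarith
  have ht2 : t ≤ 2 := by linarith
  have hW1 : W^2 < 1 := by nlinarith
  have hWl : -1 < W := by nlinarith [sq_nonneg (W+1)]
  have hWu : W < 1 := by nlinarith [sq_nonneg (W-1)]
  constructor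
  · nlinarith [sq_nonneg (W - 1), sq_nonneg t, mul_pos ht0 (sub_pos.2 hWu),
      mul_nonneg ht0.le hS, mul_nonneg (mul_nonneg ht0.le ht0.le) hS]
  · nlinarith [sq_nonneg (W - 1), sq_nonneg (W + 1), sq_nonneg t, mul_pos ht0 (sub_pos.2 hWu),
      mul_pos ht0 (show (0:ℝ) < W + 1 by linarith), mul_nonneg hr0 ht0.le,
      mul_nonneg (mul_nonneg hr0 hr0) ht0.le, sq_nonneg (r*t), sq_nonneg (r - t/8)]

lemma upper_coords {r t s S : ℝ} (hr0 : 0 ≤ r) (ht : t = 2 - r) (ht0 : 0 < t)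
    (hS : 0 ≤ S) (h1 : s^2 + S < 1) (h2 : (s - r)^2 + S < 1) :
    ((s - r/2)/t)^2 + S/(4*t) < 1 := by
  have e1 : s < 1 := by nlinarith [sq_nonneg (s-1)]
  have e2 : r - 1 < s := by nlinarith [sq_nonneg (s - r + 1)]
  have h3 : ((s - r/2)/t)^2 < 1/4 := by
    rw [div_pow, div_lt_iff₀ (by positivity)]
    nlinarith
  have h4 : S/(4*t) < 1/2 := by
    rw [div_lt_iff₀ (by positivity)]
    nlinarith
  linarith

lemma key (hn : 1 ≤ n) (x : E) (hx : ‖x‖ < 2) :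
    ENNReal.ofReal ((2-‖x‖)/16 * (Real.sqrt (2-‖x‖)/4)^(n-1)) * volume (Metric.ball (0:E) 1)
      ≤ volume (Metric.ball (0:E) 1 ∩ Metric.ball x 1) ∧
    volume (Metric.ball (0:E) 1 ∩ Metric.ball x 1)
      ≤ ENNReal.ofReal ((2-‖x‖) * (2*Real.sqrt (2-‖x‖))^(n-1)) * volume (Metric.ball (0:E) 1) := by
  set r := ‖x‖ with hr
  have hr0 : 0 ≤ r := norm_nonneg x
  set t := 2 - r with htdef
  have ht0 : 0 < t := by simp only [htdef]; linarith
  have hts : Real.sqrt t ^ 2 = t := Real.sq_sqrt ht0.le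
  have hts0 : 0 < Real.sqrt t := Real.sqrt_pos.2 ht0
  set i0 : Fin n := ⟨0, hn⟩
  set e₀ : E := EuclideanSpace.single i0 (1:ℝ) with he0
  have he0n : ‖e₀‖ = 1 := by rw [he0, EuclideanSpace.norm_single, norm_one]
  obtain ⟨O, hO⟩ := exists_rot x e₀ he0n
  -- general norm computation
  have hnorm : ∀ (v : E) (β : ℝ), ‖O v - β • O e₀‖ = ‖v - β • e₀‖ := by
    intro v β
    rw [← O.map_smul, ← O.map_sub]
    exact O.norm_map _
  constructor
  · -- lower bound
    set dlo : Fin n → ℝ := fun i => if i = i0 then t/16 else Real.sqrt t/4 with hdlo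
    set α : ℝ := r/2 + t/16 with hα
    have hb2 : (Real.sqrt t/4)^2 = t/16 := by rw [div_pow, hts]; norm_num
    have hsub : (fun w => O (α • e₀ + diagL n dlo w)) '' Metric.ball 0 1
        ⊆ Metric.ball (0:E) 1 ∩ Metric.ball x 1 := by
      rintro _ ⟨w, hw, rfl⟩
      rw [mem_ball_zero_iff, norm_lt_iff_sum_sq one_pos, one_pow, split_sq0 w i0] at hw
      set W := w i0 with hW
      set S := ∑ i ∈ Finset.univ.erase i0, (w i)^2 with hSdef
      have hS : 0 ≤ S := Finset.sum_nonneg fun i _ => sq_nonneg _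
      set v : E := α • e₀ + diagL n dlo w with hv
      show O v ∈ Metric.ball (0:E) 1 ∩ Metric.ball x 1
      have hvsum : ∀ β : ℝ, ∑ i, ((v - β • e₀) i)^2 = (α + (t/16) * W - β)^2 + (t/16) * S := by
        intro β
        rw [split_sq v β i0]
        congr 1
        · congr 2
          simp [hv, diagL_apply, hdlo, he0, EuclideanSpace.single_apply, PiLp.add_apply,
            PiLp.smul_apply, hW]
        · rw [hSdef, Finset.mul_sum]
          refine Finset.sum_congr rfl fun i hi => ?_
          have hii : i ≠ i0 := Finset.ne_of_mem_erase hi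
          rw [show v i = (Real.sqrt t/4) * w i by
            simp [hv, diagL_apply, hdlo, he0, EuclideanSpace.single_apply, PiLp.add_apply,
              PiLp.smul_apply, hii]]
          rw [mul_pow, hb2]
      obtain ⟨hg1, hg2⟩ := lower_coords hr0 hx htdef hS hw
      constructor
      · rw [mem_ball_zero_iff]
        have : O v = O v - (0:ℝ) • O e₀ := by simp
        rw [this, hnorm v 0, norm_lt_iff_sum_sq one_pos, one_pow, hvsum 0]
        simpa using hg1
      · rw [Metric.mem_ball, dist_eq_norm, hO, hnorm v r, norm_lt_iff_sum_sq one_pos, one_pow,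
          hvsum r]
        exact hg2
    calc ENNReal.ofReal (t/16 * (Real.sqrt t/4)^(n-1)) * volume (Metric.ball (0:E) 1)
        = volume ((fun w => O (α • e₀ + diagL n dlo w)) '' Metric.ball 0 1) := by
          rw [vol_img O _ (diagL n dlo), det_diagL, hdlo, prod_ite, abs_of_nonneg (by positivity)]
      _ ≤ _ := measure_mono hsub
  · -- upper bound
    set dhi : Fin n → ℝ := fun i => if i = i0 then t else 2*Real.sqrt t with hdhi
    have hsup : Metric.ball (0:E) 1 ∩ Metric.ball x 1 ⊆
        (fun w => O ((r/2) • e₀ + diagL n dhi w)) '' Metric.ball 0 1 := by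
      rintro p ⟨hp1, hp2⟩
      set v : E := O.symm p with hv
      have hpv : p = O v := (O.apply_symm_apply p).symm
      rw [mem_ball_zero_iff, hpv] at hp1
      rw [Metric.mem_ball, dist_eq_norm, hpv, hO, hnorm v r, norm_lt_iff_sum_sq one_pos,
        one_pow, split_sq v r i0] at hp2
      have hp1' : ∑ i, (v i)^2 < 1 := by
        have : O v = O v - (0:ℝ) • O e₀ := by simp
        rw [this, hnorm v 0, norm_lt_iff_sum_sq one_pos, one_pow] at hp1
        have h00 : v - (0:ℝ) • e₀ = v := by simp
        rwa [h00] at hp1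
      rw [split_sq0 v i0] at hp1'
      set s := v i0 with hs
      set S := ∑ i ∈ Finset.univ.erase i0, (v i)^2 with hSdef
      have hS : 0 ≤ S := Finset.sum_nonneg fun i _ => sq_nonneg _
      set w : E := WithLp.toLp 2 (fun i => if i = i0 then (v i0 - r/2)/t else v i/(2*Real.sqrt t) : Fin n → ℝ)
        with hwdef
      have hwS : ∑ i ∈ Finset.univ.erase i0, (w i)^2 = S/(4*t) := by
        rw [hSdef, Finset.sum_div]
        refine Finset.sum_congr rfl fun i hi => ?_
        have hii : i ≠ i0 := Finset.ne_of_mem_erase hi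
        rw [show w i = v i/(2*Real.sqrt t) from by simp [hwdef, hii], div_pow]
        congr 1
        rw [mul_pow, hts]; ring
      refine ⟨w, ?_, ?_⟩
      · rw [mem_ball_zero_iff, norm_lt_iff_sum_sq one_pos, one_pow, split_sq0 w i0, hwS,
          show w i0 = (s - r/2)/t from by simp [hwdef, hs]]
        exact upper_coords hr0 htdef ht0 hS hp1' hp2
      · have hvv : (r/2) • e₀ + diagL n dhi w = v := by
          ext i
          rcases eq_or_ne i i0 with hi | hi
          · rw [hi]
            have h5 : ((r/2) • e₀ + diagL n dhi w) i0 = r/2 + t * ((v i0 - r/2)/t) := by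
              simp [diagL_apply, hdhi, hwdef, he0, EuclideanSpace.single_apply, PiLp.add_apply,
                PiLp.smul_apply]
            rw [h5]
            field_simp
            ring
          · have h5 : ((r/2) • e₀ + diagL n dhi w) i = (2*Real.sqrt t) * (v i/(2*Real.sqrt t)) := by
              simp [diagL_apply, hdhi, hwdef, he0, EuclideanSpace.single_apply, PiLp.add_apply,
                PiLp.smul_apply, hi]
            rw [h5]
            field_simp
        show O ((r/2) • e₀ + diagL n dhi w) = p
        rw [hvv, hpv]
    calc volume (Metric.ball (0:E) 1 ∩ Metric.ball x 1)
        ≤ volume ((fun w => O ((r/2) • e₀ + diagL n dhi w)) '' Metric.ball 0 1) :=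
          measure_mono hsup
      _ = ENNReal.ofReal (t * (2*Real.sqrt t)^(n-1)) * volume (Metric.ball (0:E) 1) := by
          rw [vol_img O _ (diagL n dhi), det_diagL, hdhi, prod_ite, abs_of_nonneg (by positivity)]

end

end Stmt11Aux

open Stmt11Aux in
/-- `ω_{B(0,1)}(x) ≈ (2 - |x|)^((n+1)/2)` on `2B(0,1)`, and vanishes when `|x| ≥ 2`. -/
theorem stmt_11 (n : ℕ) (hn : 1 ≤ n) :
    ∃ c₁ : ℝ, 0 < c₁ ∧ ∃ c₂ : ℝ, 0 < c₂ ∧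
      (∀ x : EuclideanSpace ℝ (Fin n), ‖x‖ < 2 →
        c₁ * (2 - ‖x‖) ^ (((n : ℝ) + 1) / 2) ≤ omegaSet (Metric.ball 0 1) x ∧
        omegaSet (Metric.ball 0 1) x ≤ c₂ * (2 - ‖x‖) ^ (((n : ℝ) + 1) / 2)) ∧
      ∀ x : EuclideanSpace ℝ (Fin n), 2 ≤ ‖x‖ →
        volume (Metric.ball (0 : EuclideanSpace ℝ (Fin n)) 1 ∩
          ((fun y => x - y) '' Metric.ball 0 1)) = 0 := by
  have hvpos : (0:ENNReal) < volume (Metric.ball (0 : EuclideanSpace ℝ (Fin n)) 1) :=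
    Metric.measure_ball_pos volume 0 one_pos
  have hvtop : volume (Metric.ball (0 : EuclideanSpace ℝ (Fin n)) 1) ≠ ⊤ :=
    measure_ball_lt_top.ne
  set V := (volume (Metric.ball (0 : EuclideanSpace ℝ (Fin n)) 1)).toReal with hV
  have hV0 : 0 < V := ENNReal.toReal_pos hvpos.ne' hvtop
  refine ⟨V/(16*4^(n-1)), by positivity, 2^(n-1)*V, by positivity, fun x hx => ?_, fun x hx => ?_⟩
  · set r := ‖x‖ with hr
    set t := 2 - r with htdef
    have ht0 : 0 < t := by simp only [htdef]; linarith
    have hkey := key hn x hx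
    have hfin : volume (Metric.ball (0:EuclideanSpace ℝ (Fin n)) 1 ∩ Metric.ball x 1) ≠ ⊤ :=
      ((measure_mono Set.inter_subset_left).trans_lt measure_ball_lt_top).ne
    have hT := t_pow ht0 hn
    rw [omegaSet, image_sub]
    constructor
    · have h1 := ENNReal.toReal_mono hfin hkey.1
      rw [ENNReal.toReal_mul, ENNReal.toReal_ofReal (by positivity), ← hV] at h1
      refine le_trans (le_of_eq ?_) h1
      rw [div_pow, ← hT]
      ring
    · have h2 := ENNReal.toReal_mono
        (ENNReal.mul_ne_top ENNReal.ofReal_ne_top hvtop) hkey.2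
      rw [ENNReal.toReal_mul, ENNReal.toReal_ofReal (by positivity), ← hV] at h2
      refine h2.trans (le_of_eq ?_)
      rw [mul_pow, ← hT]
      ring
  · rw [image_sub]
    have hdisj : Disjoint (Metric.ball (0:EuclideanSpace ℝ (Fin n)) 1) (Metric.ball x 1) := by
      apply Metric.ball_disjoint_ball
      rw [dist_zero_left]
      linarith
    rw [Set.disjoint_iff_inter_eq_empty.mp hdisj, measure_empty]
end

section
/- Let $\Omega$ be a bounded convex subset of $\mathbb{R}^n$, $n \ge 2$, and fix $\alpha, \beta, R > 0$. Then there exist positive constants $C_1, C_2, k$ such that for every $y \in \mathscr{R}(\alpha, \beta, R)$ and every $\varepsilon \in (0, k)$ there exists $x_\varepsilon \in \Omega$ with: (1) $B(x_\varepsilon, C_1\varepsilon^2) \subseteq \Omega$; (2) $\big(2\overline{B}(x_\varepsilon, C_1\varepsilon^2) - \Omega\big) \cap \Omega \subseteq B(y, \varepsilon)$; (3) $\omega_\Omega(z) \le C_2\, \varepsilon^{n+1}$ for all $z \in 2B(x_\varepsilon, C_1\varepsilon^2)$. -/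
open MeasureTheory
open scoped Pointwise RealInnerProductSpace

/-- The open pyramid `T(α,β) ⊆ ℝ^(n+1)` with base `(-α,α)ⁿ × {0}` and apex
`(0,…,0,β)`. -/
def pyramid (n : ℕ) (α β : ℝ) : Set (EuclideanSpace ℝ (Fin (n + 1))) :=
  {x | (∀ i : Fin n, |x i.castSucc| < α - α / β * x (Fin.last n)) ∧
    0 < x (Fin.last n) ∧ x (Fin.last n) < β}

/-- The class `ℛ(α,β,R)` of boundary points of `Ω`: points `y ∈ ∂Ω` for which
there is a ball `B(x,R)` containing `Ω` with `y` on its boundary, and an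
isometry placing the pyramid `T(α,β)` inside `Ω` with apex `y` whose axis lies
on the line through `x` and `y`. -/
def classR (n : ℕ) (Ω : Set (EuclideanSpace ℝ (Fin (n + 1)))) (α β R : ℝ) :
    Set (EuclideanSpace ℝ (Fin (n + 1))) :=
  {y | y ∈ frontier Ω ∧ ∃ x : EuclideanSpace ℝ (Fin (n + 1)),
    Ω ⊆ Metric.ball x R ∧ dist x y = R ∧
    ∃ I : EuclideanSpace ℝ (Fin (n + 1)) ≃ᵢ EuclideanSpace ℝ (Fin (n + 1)),
      I '' pyramid n α β ⊆ Ω ∧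
      I (EuclideanSpace.single (Fin.last n) β) = y ∧
      ∀ t ∈ Set.Ioo (0 : ℝ) β,
        I (EuclideanSpace.single (Fin.last n) t) ∈
          affineSpan ℝ ({x, y} : Set (EuclideanSpace ℝ (Fin (n + 1))))}

lemma coord_abs_le_dist {m : ℕ} (w p : EuclideanSpace ℝ (Fin m)) (j : Fin m) :
    |w j - p j| ≤ dist w p := by
  rw [EuclideanSpace.dist_eq]
  rw [show |w j - p j| = Real.sqrt ((w j - p j) ^ 2) by rw [Real.sqrt_sq_eq_abs]]
  apply Real.sqrt_le_sqrt
  have := Finset.single_le_sum (f := fun i => dist (w i) (p i) ^ 2)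
    (fun i _ => sq_nonneg _) (Finset.mem_univ j)
  simpa [Real.dist_eq] using this

lemma lens_aux {E : Type*} [NormedAddCommGroup E] [InnerProductSpace ℝ E]
    (x y c : E) (R d : ℝ) (hdR : d ≤ R)
    (hxy : dist x y = R) (hcy : dist c y ≤ d)
    (v v' : E) (hv : dist v x < R) (hv' : dist v' x < R)
    (hmid : v + v' = (2 : ℝ) • c) :
    dist v c ≤ Real.sqrt (2 * R * d) ∧ |⟪v - c, c - x⟫| ≤ R * d := by
  set u := v - c with hu
  set a := c - x with ha
  have hva : v - x = u + a := by rw [hu, ha]; abel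
  have hv'a : v' - x = a - u := by
    have : v' = (2 : ℝ) • c - v := by rw [← hmid]; abel
    rw [this, hu, ha, two_smul]; abel
  have hna : R - d ≤ ‖a‖ := by
    have h1 : R ≤ dist x c + dist c y := by rw [← hxy]; exact dist_triangle x c y
    have : dist x c = ‖a‖ := by rw [dist_comm, dist_eq_norm, ha]
    linarith
  have hna0 : 0 ≤ ‖a‖ := norm_nonneg _
  have h1 : ‖u + a‖ ^ 2 < R ^ 2 := by
    have : ‖u + a‖ < R := by rw [← hva, ← dist_eq_norm]; exact hv
    exact pow_lt_pow_left₀ this (norm_nonneg _) two_ne_zero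
  have h2 : ‖a - u‖ ^ 2 < R ^ 2 := by
    have : ‖a - u‖ < R := by rw [← hv'a, ← dist_eq_norm]; exact hv'
    exact pow_lt_pow_left₀ this (norm_nonneg _) two_ne_zero
  have e1 : ‖u + a‖ ^ 2 = ‖u‖ ^ 2 + 2 * ⟪u, a⟫ + ‖a‖ ^ 2 := norm_add_sq_real u a
  have e2 : ‖a - u‖ ^ 2 = ‖a‖ ^ 2 - 2 * ⟪a, u⟫ + ‖u‖ ^ 2 := norm_sub_sq_real a u
  have hcomm : ⟪a, u⟫ = ⟪u, a⟫ := real_inner_comm u a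
  have ha2 : (R - d) ^ 2 ≤ ‖a‖ ^ 2 := pow_le_pow_left₀ (by linarith) hna 2
  constructor
  · rw [dist_eq_norm, ← hu]
    have hu2 : ‖u‖ ^ 2 ≤ 2 * R * d := by nlinarith [sq_nonneg d]
    calc ‖u‖ = Real.sqrt (‖u‖ ^ 2) := (Real.sqrt_sq (norm_nonneg u)).symm
      _ ≤ Real.sqrt (2 * R * d) := Real.sqrt_le_sqrt hu2
  · rw [abs_le]
    constructor <;> nlinarith [sq_nonneg ‖u‖, sq_nonneg d]

lemma ball_subset_pyramid (n : ℕ) (α β s₀ r : ℝ) (hα : 0 < α) (hβ : 0 < β)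
    (hrs2 : r < s₀) (hsb : s₀ + r < β) (hrs : r ≤ α / β * (s₀ - r)) :
    Metric.ball (EuclideanSpace.single (Fin.last (n + 1)) (β - s₀)) r ⊆
      pyramid (n + 1) α β := by
  intro w hw
  rw [Metric.mem_ball] at hw
  set p := EuclideanSpace.single (Fin.last (n + 1)) (β - s₀) with hp
  have hplast : p (Fin.last (n + 1)) = β - s₀ := by
    simp [hp, EuclideanSpace.single_apply]
  have hlast : |w (Fin.last (n + 1)) - (β - s₀)| < r := by
    rw [← hplast]; exact lt_of_le_of_lt (coord_abs_le_dist w p _) hw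
  rw [abs_lt] at hlast
  have hwl1 : 0 < w (Fin.last (n + 1)) := by linarith [hlast.1]
  have hwl2 : w (Fin.last (n + 1)) < β := by linarith [hlast.2]
  refine ⟨fun i => ?_, hwl1, hwl2⟩
  have hpc : p i.castSucc = 0 := by
    simp [hp, EuclideanSpace.single_apply, (Fin.castSucc_lt_last i).ne]
  have hcoord : |w i.castSucc| < r := by
    have := coord_abs_le_dist w p i.castSucc
    rw [hpc, sub_zero] at this
    exact lt_of_le_of_lt this hw
  have h1 : α - α / β * w (Fin.last (n + 1)) = α / β * (β - w (Fin.last (n + 1))) := by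
    field_simp
  rw [h1]
  have h2 : s₀ - r < β - w (Fin.last (n + 1)) := by linarith [hlast.2]
  calc |w i.castSucc| < r := hcoord
    _ ≤ α / β * (s₀ - r) := hrs
    _ < α / β * (β - w (Fin.last (n + 1))) := by
        apply mul_lt_mul_of_pos_left h2 (by positivity)

lemma volume_box {m : ℕ} (L : Fin m → ℝ) :
    volume ({w : EuclideanSpace ℝ (Fin m) | ∀ j, w j ∈ Set.Icc (-(L j)) (L j)}) =
      ∏ j, ENNReal.ofReal (2 * L j) := by
  have hmp := EuclideanSpace.volume_preserving_symm_measurableEquiv_toLp (Fin m)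
  have hmeas : MeasurableSet (Set.univ.pi fun j : Fin m => Set.Icc (-(L j)) (L j)) :=
    MeasurableSet.univ_pi fun j => measurableSet_Icc
  have hpre : (MeasurableEquiv.toLp 2 (Fin m → ℝ)).symm ⁻¹'
      (Set.univ.pi fun j : Fin m => Set.Icc (-(L j)) (L j)) =
      {w : EuclideanSpace ℝ (Fin m) | ∀ j, w j ∈ Set.Icc (-(L j)) (L j)} := by
    ext w
    simp only [Set.mem_preimage, Set.mem_pi, Set.mem_univ, forall_true_left, Set.mem_setOf_eq]
    rfl
  rw [← hpre, hmp.measure_preimage hmeas.nullMeasurableSet, volume_pi_pi]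
  congr 1; ext j; rw [Real.volume_Icc]; congr 1; ring


set_option maxHeartbeats 1200000 in
/-- For a bounded convex `Ω ⊆ ℝ^(n+2)` and fixed `α, β, R > 0`, there are
constants `C₁, C₂, k > 0` such that every `y ∈ ℛ(α,β,R)` and `ε ∈ (0,k)` admit
`x_ε ∈ Ω` with: (1) `B(x_ε, C₁ε²) ⊆ Ω`; (2) `(2B̄(x_ε,C₁ε²) - Ω) ∩ Ω ⊆ B(y,ε)`;
(3) `ω_Ω ≤ C₂ ε^(dim+1)` on `2B(x_ε, C₁ε²)`. -/
theorem stmt_14 (n : ℕ) (Ω : Set (EuclideanSpace ℝ (Fin (n + 2))))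
    (hconv : Convex ℝ Ω) (hbd : Bornology.IsBounded Ω)
    (α β R : ℝ) (hα : 0 < α) (hβ : 0 < β) (hR : 0 < R) :
    ∃ C₁ : ℝ, 0 < C₁ ∧ ∃ C₂ : ℝ, 0 < C₂ ∧ ∃ k : ℝ, 0 < k ∧
      ∀ y ∈ classR (n + 1) Ω α β R, ∀ ε ∈ Set.Ioo (0 : ℝ) k,
        ∃ xε ∈ Ω,
          Metric.ball xε (C₁ * ε ^ 2) ⊆ Ω ∧
          ((2 : ℝ) • Metric.closedBall xε (C₁ * ε ^ 2) - Ω) ∩ Ω ⊆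
            Metric.ball y ε ∧
          ∀ z ∈ (2 : ℝ) • Metric.ball xε (C₁ * ε ^ 2),
            omegaSet Ω z ≤ C₂ * ε ^ (n + 3) := by
  refine ⟨α / (64 * R * (α + β)), by positivity, 1 / R, by positivity,
    min R (Real.sqrt (R * β)), lt_min hR (Real.sqrt_pos.2 (by positivity)), ?_⟩
  rintro y ⟨-, x, hΩx, hxy, I, hIpyr, hIapex, -⟩ ε ⟨hε0, hεk⟩
  set C₁ : ℝ := α / (64 * R * (α + β)) with hC₁
  set s₀ : ℝ := ε ^ 2 / (32 * R) with hs₀def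
  set r : ℝ := C₁ * ε ^ 2 with hrdef
  have hs₀ : 0 < s₀ := by positivity
  have hr0 : 0 < r := by positivity
  have hεR : ε < R := lt_of_lt_of_le hεk (min_le_left _ _)
  have hε2 : ε ^ 2 < R * β := by
    have h1 : ε < Real.sqrt (R * β) := lt_of_lt_of_le hεk (min_le_right _ _)
    have := pow_lt_pow_left₀ h1 hε0.le two_ne_zero
    rwa [Real.sq_sqrt (by positivity)] at this
  have hrs2 : r < s₀ := by
    rw [hrdef, hs₀def, hC₁, div_mul_eq_mul_div, div_lt_div_iff₀ (by positivity) (by positivity)]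
    nlinarith [mul_pos (mul_pos (pow_pos hε0 2) hR) hα, mul_pos (mul_pos (pow_pos hε0 2) hR) hβ]
  set d : ℝ := s₀ + r with hddef
  have hd0 : 0 ≤ d := by positivity
  have hd2 : d ≤ ε ^ 2 / (16 * R) := by
    rw [hddef, hs₀def]
    have : r ≤ ε ^ 2 / (32 * R) := hrs2.le
    rw [show ε ^ 2 / (16 * R) = ε ^ 2 / (32 * R) + ε ^ 2 / (32 * R) by ring]
    linarith
  have hdε : d < ε / 2 := by
    have : ε ^ 2 / (16 * R) < ε / 2 := by
      rw [div_lt_div_iff₀ (by positivity) (by norm_num)]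
      nlinarith
    linarith
  have hdR2 : d ≤ R / 2 := by nlinarith
  have hdR : d ≤ R := by linarith
  have hsb : s₀ + r < β := by
    have : d ≤ ε ^ 2 / (16 * R) := hd2
    have h2 : ε ^ 2 / (16 * R) < β := by
      rw [div_lt_iff₀ (by positivity)]
      nlinarith
    rw [← hddef]; linarith
  have hsqrt : Real.sqrt (2 * R * d) ≤ ε / 2 := by
    have h1 : 2 * R * d ≤ (ε / 2) ^ 2 := by
      have := hd2
      rw [div_pow]
      rw [le_div_iff₀ (by norm_num : (0:ℝ) < 2 ^ 2)]
      have : 2 * R * d ≤ 2 * R * (ε ^ 2 / (16 * R)) :=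
        mul_le_mul_of_nonneg_left hd2 (by positivity)
      calc 2 * R * d * 2 ^ 2 ≤ 2 * R * (ε ^ 2 / (16 * R)) * 2 ^ 2 := by nlinarith
        _ = ε ^ 2 / 2 := by field_simp; ring
        _ ≤ ε ^ 2 := by nlinarith
    calc Real.sqrt (2 * R * d) ≤ Real.sqrt ((ε / 2) ^ 2) := Real.sqrt_le_sqrt h1
      _ = ε / 2 := Real.sqrt_sq (by positivity)
  have hrs : r ≤ α / β * (s₀ - r) := by
    rw [div_mul_eq_mul_div, le_div_iff₀ hβ]
    have key : r * (α + β) ≤ α * s₀ := by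
      rw [hrdef, hC₁, hs₀def]
      rw [div_mul_eq_mul_div, div_mul_eq_mul_div, ← mul_div_assoc,
        div_le_div_iff₀ (by positivity) (by positivity)]
      nlinarith [mul_nonneg (mul_nonneg (mul_nonneg hα.le (sq_nonneg ε))
        (by linarith : (0:ℝ) ≤ α + β)) hR.le]
    nlinarith [mul_pos hα hr0]
  -- the pyramid point
  set p := EuclideanSpace.single (Fin.last (n + 1)) (β - s₀) with hpdef
  have hballp : Metric.ball p r ⊆ pyramid (n + 1) α β :=
    ball_subset_pyramid n α β s₀ r hα hβ hrs2 hsb hrs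
  set xε := I p with hxεdef
  have hpmem : p ∈ pyramid (n + 1) α β := hballp (Metric.mem_ball_self hr0)
  have hxεΩ : xε ∈ Ω := hIpyr ⟨p, hpmem, rfl⟩
  have hxεy : dist xε y = s₀ := by
    rw [hxεdef, ← hIapex, I.dist_eq, hpdef, EuclideanSpace.dist_single_same,
      Real.dist_eq]
    rw [show β - s₀ - β = -s₀ by ring, abs_neg, abs_of_pos hs₀]
  have hballxε : Metric.ball xε r ⊆ Ω := by
    rw [hxεdef, ← I.image_ball]
    exact (Set.image_mono hballp).trans hIpyr
  refine ⟨xε, hxεΩ, hballxε, ?_, ?_⟩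
  · -- part (2)
    rintro z ⟨hz1, hzΩ⟩
    rcases Set.mem_sub.1 hz1 with ⟨a, ha, u, huΩ, rfl⟩
    rcases Set.mem_smul_set.1 ha with ⟨w, hw, rfl⟩
    rw [Metric.mem_closedBall] at hw
    have hwy : dist w y ≤ d := by
      calc dist w y ≤ dist w xε + dist xε y := dist_triangle _ _ _
        _ ≤ r + s₀ := by rw [hxεy]; linarith
        _ = d := by rw [hddef]; ring
    have hmid : ((2:ℝ) • w - u) + u = (2:ℝ) • w := by abel
    obtain ⟨h1, -⟩ := lens_aux x y w R d hdR hxy hwy ((2:ℝ) • w - u) u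
      (Metric.mem_ball.1 (hΩx hzΩ)) (Metric.mem_ball.1 (hΩx huΩ)) hmid
    rw [Metric.mem_ball]
    calc dist ((2:ℝ) • w - u) y ≤ dist ((2:ℝ) • w - u) w + dist w y := dist_triangle _ _ _
      _ ≤ Real.sqrt (2 * R * d) + d := add_le_add h1 hwy
      _ < ε / 2 + ε / 2 := by linarith
      _ = ε := by ring
  · -- part (3)
    rintro z hz
    rcases Set.mem_smul_set.1 hz with ⟨w, hw, rfl⟩
    rw [Metric.mem_ball] at hw
    have hwy : dist w y ≤ d := by
      calc dist w y ≤ dist w xε + dist xε y := dist_triangle _ _ _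
        _ ≤ r + s₀ := by rw [hxεy]; linarith [hw.le]
        _ = d := by rw [hddef]; ring
    -- the direction
    set a : EuclideanSpace ℝ (Fin (n + 2)) := w - x with hadef
    have hna : R - d ≤ ‖a‖ := by
      have h1 : R ≤ dist x w + dist w y := by rw [← hxy]; exact dist_triangle x w y
      have h2 : dist x w = ‖a‖ := by rw [dist_comm, dist_eq_norm, hadef]
      linarith
    have hnapos : 0 < ‖a‖ := by linarith [hdR2, hR]
    have hane : a ≠ 0 := by intro h; rw [h, norm_zero] at hnapos; exact lt_irrefl _ hnapos
    set e : EuclideanSpace ℝ (Fin (n + 2)) := ‖a‖⁻¹ • a with hedef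
    have hne : ‖e‖ = 1 := norm_smul_inv_norm hane
    -- orthonormal basis containing e
    have hcard : Module.finrank ℝ (EuclideanSpace ℝ (Fin (n + 2))) =
        Fintype.card (Fin (n + 2)) := by simp [finrank_euclideanSpace]
    have horth : Orthonormal ℝ (Set.restrict {(0 : Fin (n + 2))} (fun _ => e)) := by
      constructor
      · intro i; exact hne
      · intro i j hij
        exact absurd (Subtype.ext (by
          have hi := i.2; have hj := j.2
          simp only [Set.mem_singleton_iff] at hi hj
          rw [hi, hj])) hij
    obtain ⟨b, hb⟩ := horth.exists_orthonormalBasis_extension_of_card_eq hcard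
    have hbj₀ : b 0 = e := hb 0 rfl
    set L : Fin (n + 2) → ℝ := fun j => if j = 0 then 2 * d else Real.sqrt (2 * R * d)
      with hLdef
    have hL0 : ∀ j, 0 ≤ L j := by
      intro j; rw [hLdef]; dsimp only
      split
      · linarith
      · exact Real.sqrt_nonneg _
    set Box : Set (EuclideanSpace ℝ (Fin (n + 2))) :=
      {q | ∀ j, q j ∈ Set.Icc (-(L j)) (L j)} with hBoxdef
    -- the inclusion
    set S := Ω ∩ ((fun v => (2:ℝ) • w - v) '' Ω) with hSdef
    have hincl : S ⊆ (fun v => -w + v) ⁻¹' (⇑b.repr ⁻¹' Box) := by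
      rintro v ⟨hvΩ, g, hgΩ, hgv⟩
      have hv' : (2:ℝ) • w - v = g := by rw [← hgv]; module
      have hmid : v + ((2:ℝ) • w - v) = (2:ℝ) • w := by abel
      obtain ⟨h1, h2⟩ := lens_aux x y w R d hdR hxy hwy v ((2:ℝ) • w - v)
        (Metric.mem_ball.1 (hΩx hvΩ)) (by rw [hv']; exact Metric.mem_ball.1 (hΩx hgΩ)) hmid
      simp only [Set.mem_preimage, hBoxdef, Set.mem_setOf_eq]
      intro j
      have hvw : -w + v = v - w := by abel
      rw [hvw]
      have hrepr : b.repr (v - w) j = ⟪b j, v - w⟫ := b.repr_apply_apply (v - w) j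
      rw [hrepr, Set.mem_Icc, ← abs_le]
      by_cases hj : j = 0
      · rw [hj, hbj₀, hLdef]
        simp only [if_pos rfl]
        rw [hedef, real_inner_smul_left]
        rw [abs_mul, abs_inv, abs_of_pos hnapos]
        have hinner : |⟪a, v - w⟫| ≤ R * d := by
          rw [show ⟪a, v - w⟫ = ⟪v - w, a⟫ from real_inner_comm (v - w) a]
          have : w - x = a := hadef.symm
          rw [← this]
          exact h2
        have h3 : ‖a‖⁻¹ * |⟪a, v - w⟫| ≤ ‖a‖⁻¹ * (R * d) :=
          mul_le_mul_of_nonneg_left hinner (by positivity)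
        have h4 : ‖a‖⁻¹ * (R * d) ≤ 2 * d := by
          rw [inv_mul_le_iff₀ hnapos]
          calc R * d ≤ 2 * d * (R - d) := by nlinarith
            _ ≤ 2 * d * ‖a‖ := by
                apply mul_le_mul_of_nonneg_left hna (by linarith)
            _ = ‖a‖ * (2 * d) := by ring
        calc ‖a‖⁻¹ * |⟪a, v - w⟫| ≤ ‖a‖⁻¹ * (R * d) := h3
          _ ≤ 2 * d := h4
          _ = L 0 := by rw [hLdef]; simp
      · rw [hLdef]; simp only [if_neg hj]
        calc |⟪b j, v - w⟫| ≤ ‖b j‖ * ‖v - w‖ := abs_real_inner_le_norm _ _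
          _ = ‖v - w‖ := by rw [b.orthonormal.1 j, one_mul]
          _ = dist v w := (dist_eq_norm v w).symm
          _ ≤ Real.sqrt (2 * R * d) := h1
    -- volume estimate
    have hBoxmeas : MeasurableSet Box := by
      have : Box = (MeasurableEquiv.toLp 2 (Fin (n + 2) → ℝ)).symm ⁻¹' Set.univ.pi fun j : Fin (n + 2) => Set.Icc (-(L j)) (L j) := by
        ext q
        simp only [hBoxdef, Set.mem_setOf_eq]
        exact Set.mem_univ_pi.symm
      rw [this]
      exact (MeasurableEquiv.toLp 2 _).symm.measurable (MeasurableSet.univ_pi fun j => measurableSet_Icc)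
    have hvolS : volume S ≤ ENNReal.ofReal (1 / R * ε ^ (n + 3)) := by
      calc volume S ≤ volume ((fun v => -w + v) ⁻¹' (⇑b.repr ⁻¹' Box)) :=
            measure_mono hincl
        _ = volume (⇑b.repr ⁻¹' Box) := measure_preimage_add volume (-w) _
        _ = volume Box := b.measurePreserving_repr.measure_preimage hBoxmeas.nullMeasurableSet
        _ = ∏ j, ENNReal.ofReal (2 * L j) := volume_box L
        _ ≤ ENNReal.ofReal (1 / R * ε ^ (n + 3)) := by
            rw [← ENNReal.ofReal_prod_of_nonneg (fun j _ => by
              have := hL0 j; linarith)]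
            apply ENNReal.ofReal_le_ofReal
            -- real product estimate
            have hsplit : ∏ j : Fin (n + 2), (2 * L j) =
                (2 * L 0) * ∏ j ∈ Finset.univ.erase 0, (2 * L j) :=
              (Finset.mul_prod_erase Finset.univ _ (Finset.mem_univ 0)).symm
            rw [hsplit]
            have hL0' : L 0 = 2 * d := by rw [hLdef]; simp
            have hprod : ∏ j ∈ Finset.univ.erase (0 : Fin (n + 2)), (2 * L j) ≤
                ε ^ (n + 1) := by
              have hcard' : (Finset.univ.erase (0 : Fin (n + 2))).card = n + 1 := by
                rw [Finset.card_erase_of_mem (Finset.mem_univ _), Finset.card_univ,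
                  Fintype.card_fin]
                omega
              calc ∏ j ∈ Finset.univ.erase (0 : Fin (n + 2)), (2 * L j)
                  ≤ ∏ _j ∈ Finset.univ.erase (0 : Fin (n + 2)), ε := by
                    apply Finset.prod_le_prod
                    · intro j _; have := hL0 j; linarith
                    · intro j hj
                      rw [Finset.mem_erase] at hj
                      rw [hLdef]; simp only [if_neg hj.1]
                      linarith [hsqrt]
                _ = ε ^ (n + 1) := by rw [Finset.prod_const, hcard']
            have h2L0 : 2 * L 0 ≤ ε ^ 2 / (4 * R) := by
              rw [hL0', show ε ^ 2 / (4 * R) = 4 * (ε ^ 2 / (16 * R)) by field_simp; ring]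
              linarith
            have hprodnn : (0:ℝ) ≤ ∏ j ∈ Finset.univ.erase (0 : Fin (n + 2)), (2 * L j) :=
              Finset.prod_nonneg fun j _ => by have := hL0 j; linarith
            calc (2 * L 0) * ∏ j ∈ Finset.univ.erase (0 : Fin (n + 2)), (2 * L j)
                ≤ (ε ^ 2 / (4 * R)) * ε ^ (n + 1) := by
                  apply mul_le_mul h2L0 hprod hprodnn (by positivity)
              _ = ε ^ (n + 3) / (4 * R) := by
                  rw [show (n + 3) = 2 + (n + 1) by ring, pow_add]; ring
              _ ≤ ε ^ (n + 3) / R := by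
                  apply div_le_div_of_nonneg_left (pow_nonneg hε0.le _) hR (by linarith)
              _ = 1 / R * ε ^ (n + 3) := (one_div_mul_eq_div R _).symm
    rw [omegaSet]
    exact ENNReal.toReal_le_of_le_ofReal (by positivity) hvolS
end
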